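/- Let Δ = (𝔡₁,…,𝔡_d) be a system of delta operators on ℝ[x₁,…,x_d] with basic sequence (p_n)_{n∈ℕ^d}, let Z = (z_k)_{k∈ℕ^d} ⊆ ℝ^d be a grid with delta Gončarov polynomials t_k(·;Z), and let S ⊆ ℕ^d be a finite lower set (k ∈ S and j ≤ k imply j ∈ S). Then every polynomial P in the ℝ-linear span of {p_k : k ∈ S} satisfies the expansion P = ∑_{k∈S} (1/k!)·(𝔡^k P)(z_k)·t_k(·;Z). -/

import Mathlib

open MvPolynomial

noncomputable section

/-- The algebra of real polynomials in `d` variables `x₁, …, x_d`. -/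
abbrev MvP (d : ℕ) := MvPolynomial (Fin d) ℝ

/-- The shift operator `E_v : p(x) ↦ p(x + v)`. -/
def shiftOp {d : ℕ} (v : Fin d → ℝ) : Module.End ℝ (MvP d) :=
  (MvPolynomial.aeval (fun i => X i + C (v i)) : MvP d →ₐ[ℝ] MvP d).toLinearMap

/-- A linear operator on `ℝ[x₁,…,x_d]` is shift-invariant if it commutes with
every shift operator. -/
def ShiftInv {d : ℕ} (L : Module.End ℝ (MvP d)) : Prop :=
  ∀ v : Fin d → ℝ, L * shiftOp v = shiftOp v * L

/-- `(𝔡₁, …, 𝔡_d)` is a system of delta operators: each `𝔡_i` is shift-invariant,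
each `𝔡_i` maps every homogeneous linear polynomial to a constant, and for a
nonzero homogeneous linear polynomial at least one `𝔡_i p` is nonzero. -/
def IsDeltaSystem {d : ℕ} (D : Fin d → Module.End ℝ (MvP d)) : Prop :=
  (∀ i, ShiftInv (D i)) ∧
  ∀ a : Fin d → ℝ,
    (∀ i, ∃ c : ℝ, D i (∑ j, C (a j) * X j) = C c) ∧
    ((∑ j, C (a j) * X j) ≠ 0 → ∃ i, D i (∑ j, C (a j) * X j) ≠ 0)


/-- `𝔡^k = 𝔡₁^{k₁} ∘ ⋯ ∘ 𝔡_d^{k_d}`. -/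
def dpow {d : ℕ} (D : Fin d → Module.End ℝ (MvP d)) (k : Fin d → ℕ) :
    Module.End ℝ (MvP d) :=
  (List.ofFn fun i => (D i) ^ (k i)).prod

/-- `(p_n)_{n ∈ ℕ^d}` is a basic sequence of the system `D`:
`deg p_n = |n|`, `p_0 = 1`, `p_n(0) = 0` for `|n| ≥ 1`, and
`𝔡_i p_n = n_i • p_{n - e_i}`. -/
def IsBasicSeq {d : ℕ} (D : Fin d → Module.End ℝ (MvP d))
    (p : (Fin d → ℕ) → MvP d) : Prop :=
  (∀ n : Fin d → ℕ, (p n).totalDegree = ∑ i, n i) ∧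
  p 0 = 1 ∧
  (∀ n : Fin d → ℕ, 1 ≤ ∑ i, n i → eval (0 : Fin d → ℝ) (p n) = 0) ∧
  ∀ (n : Fin d → ℕ) (i : Fin d), D i (p n) = (n i : ℝ) • p (n - Pi.single i 1)

/-- `Π_n(Δ)`: the span of the basic polynomials `p_k` with `k ≤ n`
(componentwise order). -/
def Pin {d : ℕ} (p : (Fin d → ℕ) → MvP d) (n : Fin d → ℕ) : Submodule ℝ (MvP d) :=
  Submodule.span ℝ (p '' {k | k ≤ n})

/-- `n! = n₁! ⋯ n_d!` as a real number. -/
def natFact {d : ℕ} (n : Fin d → ℕ) : ℝ := ∏ i, (Nat.factorial (n i) : ℝ)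

/-- `t` is the delta Gončarov polynomial `t_n(·;Z)` for the system `D` with
basic sequence `p` and grid `Z`: `t ∈ Π_n(Δ)` and
`(𝔡^k t)(z_k) = n!·δ_{k,n}` for all `k ≤ n`. -/
def IsGoncarov {d : ℕ} (D : Fin d → Module.End ℝ (MvP d))
    (p : (Fin d → ℕ) → MvP d) (Z : (Fin d → ℕ) → (Fin d → ℝ))
    (n : Fin d → ℕ) (t : MvP d) : Prop :=
  t ∈ Pin p n ∧
  ∀ k ≤ n, eval (Z k) (dpow D k t) = if k = n then natFact n else 0

/-! Each `𝔡^j` acts on the basic sequence by lowering the index, so the functionals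
`P ↦ (𝔡^j P)(z_j)`, `j ∈ S`, are triangular with diagonal `j!` on `{p_k : k ∈ S}` with
respect to the componentwise order: a polynomial of `span {p_k : k ∈ S}` killed by all of
them is `0`. The Gončarov polynomials are dual to these functionals, and the lower-set
hypothesis puts each `t_k`, `k ∈ S`, into `span {p_k : k ∈ S}`; hence `P` minus its
expansion lies in that span and is killed by every functional. -/

lemma natFact_ne_zero {d : ℕ} (n : Fin d → ℕ) : natFact n ≠ 0 :=
  Finset.prod_ne_zero_iff.2 fun i _ => Nat.cast_ne_zero.2 (Nat.factorial_ne_zero (n i))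

section BasicSequence

variable {d : ℕ} {D : Fin d → Module.End ℝ (MvP d)} {p : (Fin d → ℕ) → MvP d}

lemma pow_apply_basic (hDp : ∀ n i, D i (p n) = (n i : ℝ) • p (n - Pi.single i 1))
    (i : Fin d) (j : ℕ) (n : Fin d → ℕ) :
    (D i ^ j) (p n) = ((n i).descFactorial j : ℝ) • p (n - Pi.single i j) := by
  induction j with
  | zero => simp
  | succ j ih =>
    rw [pow_succ', Module.End.mul_apply, ih, map_smul, hDp, smul_smul, tsub_tsub,
      ← Pi.single_add, Nat.descFactorial_succ]
    simp [mul_comm]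

lemma list_prod_pow_apply_basic
    (hDp : ∀ n i, D i (p n) = (n i : ℝ) • p (n - Pi.single i 1)) (k : Fin d → ℕ) :
    ∀ l : List (Fin d), l.Nodup → ∀ n,
      (l.map fun i => D i ^ k i).prod (p n) =
        (∏ i ∈ l.toFinset, ((n i).descFactorial (k i) : ℝ)) •
          p (n - fun i => if i ∈ l then k i else 0)
  | [], _, n => by simp [← Pi.zero_def]
  | i :: l, hnd, n => by
    obtain ⟨hi, hl⟩ := List.nodup_cons.1 hnd
    have hshift : (n - fun i' => if i' ∈ l then k i' else 0) - Pi.single i (k i) =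
        n - fun i' => if i' ∈ i :: l then k i' else 0 := by
      funext i'
      by_cases h : i' = i
      · subst h; simp [hi]
      · simp [h]
    rw [List.map_cons, List.prod_cons, Module.End.mul_apply,
      list_prod_pow_apply_basic hDp k l hl, map_smul, pow_apply_basic hDp, smul_smul, hshift,
      List.toFinset_cons, Finset.prod_insert (by simpa using hi)]
    simp [hi, mul_comm]

lemma dpow_apply_basic (hDp : ∀ n i, D i (p n) = (n i : ℝ) • p (n - Pi.single i 1))
    (k n : Fin d → ℕ) :
    dpow D k (p n) = (∏ i, ((n i).descFactorial (k i) : ℝ)) • p (n - k) := by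
  rw [dpow, List.ofFn_eq_map,
    list_prod_pow_apply_basic hDp k _ (List.nodup_finRange d), List.toFinset_finRange]
  simp

lemma dpow_apply_basic_of_not_le
    (hDp : ∀ n i, D i (p n) = (n i : ℝ) • p (n - Pi.single i 1)) {k n : Fin d → ℕ}
    (h : ¬ k ≤ n) : dpow D k (p n) = 0 := by
  obtain ⟨i, hi⟩ : ∃ i, n i < k i := by simpa [Pi.le_def] using h
  rw [dpow_apply_basic hDp, Finset.prod_eq_zero (Finset.mem_univ i)
    (by exact_mod_cast Nat.descFactorial_eq_zero_iff_lt.2 hi), zero_smul]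

lemma eval_dpow_apply_basic_self
    (hDp : ∀ n i, D i (p n) = (n i : ℝ) • p (n - Pi.single i 1)) (hp0 : p 0 = 1)
    (z : Fin d → ℝ) (k : Fin d → ℕ) : eval z (dpow D k (p k)) = natFact k := by
  simp [dpow_apply_basic hDp, hp0, natFact, Nat.descFactorial_self]

lemma dpow_eq_zero_of_mem_Pin
    (hDp : ∀ n i, D i (p n) = (n i : ℝ) • p (n - Pi.single i 1)) {j m : Fin d → ℕ}
    (h : ¬ j ≤ m) {q : MvP d} (hq : q ∈ Pin p m) : dpow D j q = 0 := by
  refine (Submodule.span_le (p := LinearMap.ker (dpow D j))).2 ?_ hq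
  rintro _ ⟨k, hk, rfl⟩
  exact dpow_apply_basic_of_not_le hDp fun hjk => h (hjk.trans hk)

variable (Z : (Fin d → ℕ) → (Fin d → ℝ))

lemma coeff_eq_zero_of_eval_dpow_eq_zero
    (hDp : ∀ n i, D i (p n) = (n i : ℝ) • p (n - Pi.single i 1)) (hp0 : p 0 = 1)
    {S : Finset (Fin d → ℕ)} {a : (Fin d → ℕ) → ℝ}
    (h : ∀ j ∈ S, eval (Z j) (dpow D j (∑ k ∈ S, a k • p k)) = 0) :
    ∀ k ∈ S, a k = 0 := by
  classical
  by_contra! hne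
  obtain ⟨k, hk, hmax⟩ : ∃ k, Maximal (· ∈ S.filter (a · ≠ 0)) k := by
    obtain ⟨k, hkS, hak⟩ := hne
    exact Finset.exists_maximal ⟨k, Finset.mem_filter.2 ⟨hkS, hak⟩⟩
  obtain ⟨hkS, hak⟩ := Finset.mem_filter.1 hk
  have hdiag : eval (Z k) (dpow D k (∑ j ∈ S, a j • p j)) = a k * natFact k := by
    rw [map_sum, map_sum, Finset.sum_eq_single_of_mem k hkS, map_smul, smul_eval,
      eval_dpow_apply_basic_self hDp hp0]
    intro j hjS hjk
    by_cases haj : a j = 0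
    · simp [haj]
    by_cases hkj : k ≤ j
    · exact absurd (le_antisymm (hmax (Finset.mem_filter.2 ⟨hjS, haj⟩) hkj) hkj) hjk
    · simp [dpow_apply_basic_of_not_le hDp hkj]
  exact hak ((mul_eq_zero.1 (hdiag ▸ h k hkS)).resolve_right (natFact_ne_zero k))

lemma eq_zero_of_mem_span_of_eval_dpow_eq_zero
    (hDp : ∀ n i, D i (p n) = (n i : ℝ) • p (n - Pi.single i 1)) (hp0 : p 0 = 1)
    {S : Finset (Fin d → ℕ)} {Q : MvP d} (hQ : Q ∈ Submodule.span ℝ (p '' ↑S))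
    (h : ∀ j ∈ S, eval (Z j) (dpow D j Q) = 0) : Q = 0 := by
  obtain ⟨a, rfl⟩ := (Submodule.mem_span_image_finset_iff_exists_fun' ℝ).1 hQ
  have ha := coeff_eq_zero_of_eval_dpow_eq_zero Z hDp hp0 h
  exact Finset.sum_eq_zero fun k hk => by rw [ha k hk, zero_smul]

end BasicSequence

section Goncarov

variable {d : ℕ} {D : Fin d → Module.End ℝ (MvP d)} {p : (Fin d → ℕ) → MvP d}
  {Z : (Fin d → ℕ) → (Fin d → ℝ)}

lemma IsGoncarov.eval_dpow (hDp : ∀ n i, D i (p n) = (n i : ℝ) • p (n - Pi.single i 1))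
    {k : Fin d → ℕ} {t : MvP d} (ht : IsGoncarov D p Z k t) (j : Fin d → ℕ) :
    eval (Z j) (dpow D j t) = if j = k then natFact k else 0 := by
  by_cases hjk : j ≤ k
  · exact ht.2 j hjk
  · rw [dpow_eq_zero_of_mem_Pin hDp hjk ht.1, if_neg (by rintro rfl; exact hjk le_rfl),
      map_zero]

lemma IsGoncarov.mem_span {S : Finset (Fin d → ℕ)} (hS : ∀ k ∈ S, ∀ j ≤ k, j ∈ S)
    {k : Fin d → ℕ} (hk : k ∈ S) {t : MvP d} (ht : IsGoncarov D p Z k t) :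
    t ∈ Submodule.span ℝ (p '' ↑S) :=
  Submodule.span_mono (Set.image_mono fun j hj => hS k hk j hj) ht.1

lemma eval_dpow_sum_smul_goncarov
    (hDp : ∀ n i, D i (p n) = (n i : ℝ) • p (n - Pi.single i 1))
    {t : (Fin d → ℕ) → MvP d} (ht : ∀ k, IsGoncarov D p Z k (t k))
    {S : Finset (Fin d → ℕ)} (c : (Fin d → ℕ) → ℝ) {j : Fin d → ℕ} (hj : j ∈ S) :
    eval (Z j) (dpow D j (∑ k ∈ S, c k • t k)) = c j * natFact j := by
  simp [map_sum, (ht _).eval_dpow hDp j, hj]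

end Goncarov

theorem goncarov_expansion_general {d : ℕ}
    (D : Fin d → Module.End ℝ (MvP d))
    (p : (Fin d → ℕ) → MvP d) (hp : IsBasicSeq D p)
    (Z : (Fin d → ℕ) → (Fin d → ℝ))
    (t : (Fin d → ℕ) → MvP d) (ht : ∀ k, IsGoncarov D p Z k (t k))
    (S : Finset (Fin d → ℕ)) (hS : ∀ k ∈ S, ∀ j ≤ k, j ∈ S) :
    ∀ P ∈ Submodule.span ℝ (p '' ↑S),
      P = ∑ k ∈ S, ((natFact k)⁻¹ * eval (Z k) ((dpow D k) P)) • t k := by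
  obtain ⟨-, hp0, -, hDp⟩ := hp
  intro P hP
  rw [← sub_eq_zero]
  refine eq_zero_of_mem_span_of_eval_dpow_eq_zero Z hDp hp0
    (sub_mem hP (Submodule.sum_mem _ fun k hk => Submodule.smul_mem _ _
      ((ht k).mem_span hS hk))) fun j hj => ?_
  rw [map_sub, eval_sub, eval_dpow_sum_smul_goncarov hDp ht _ hj, sub_eq_zero]
  field_simp [natFact_ne_zero j]

/-- every `P` in the span of `{p_k : k ∈ S}` (with `S` a finite
lower set) expands as `P = ∑_{k ∈ S} (1/k!)·(𝔡^k P)(z_k) • t_k(·;Z)`. -/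
theorem goncarov_expansion {d : ℕ} (hd : 1 ≤ d)
    (D : Fin d → Module.End ℝ (MvP d)) (hD : IsDeltaSystem D)
    (p : (Fin d → ℕ) → MvP d) (hp : IsBasicSeq D p)
    (Z : (Fin d → ℕ) → (Fin d → ℝ))
    (t : (Fin d → ℕ) → MvP d) (ht : ∀ k, IsGoncarov D p Z k (t k))
    (S : Finset (Fin d → ℕ)) (hS : ∀ k ∈ S, ∀ j ≤ k, j ∈ S) :
    ∀ P ∈ Submodule.span ℝ (p '' ↑S),
      P = ∑ k ∈ S, ((natFact k)⁻¹ * eval (Z k) ((dpow D k) P)) • t k :=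
  goncarov_expansion_general D p hp Z t ht S hS

end
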